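/- For any N×N complex matrix B, real ℓ > 0, and exponents 2 ≤ p ≤ q ≤ ∞, the ℓ-weighted Schatten norms satisfy |||B|||_{p,ℓ} ≲ |||B|||_{q,ℓ}, i.e. there is a constant C (independent of N, ℓ, B) with |||B|||_{p,ℓ} ≤ C |||B|||_{q,ℓ}. -/

import Mathlib

open Matrix MeasureTheory Asymptotics
open scoped ComplexOrder BigOperators

/-- Normalized trace `⟨M⟩ = N⁻¹ Tr M`. -/
noncomputable def ntr {N : ℕ} (M : Matrix (Fin N) (Fin N) ℂ) : ℂ :=
  (N : ℂ)⁻¹ * M.trace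

/-- `|A| = (A Aᴴ)^{1/2}`. -/
noncomputable def matAbs {N : ℕ} (A : Matrix (Fin N) (Fin N) ℂ) : Matrix (Fin N) (Fin N) ℂ :=
  (Matrix.posSemidef_self_mul_conjTranspose A).1.eigenvectorUnitary.1 *
    diagonal ((↑) ∘ Real.sqrt ∘ (Matrix.posSemidef_self_mul_conjTranspose A).1.eigenvalues) *
    (star (Matrix.posSemidef_self_mul_conjTranspose A).1.eigenvectorUnitary : Matrix (Fin N) (Fin N) ℂ)

/-- Euclidean operator norm of a matrix. -/
noncomputable def opNorm {N : ℕ} (A : Matrix (Fin N) (Fin N) ℂ) : ℝ :=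
  ‖Matrix.toEuclideanCLM (𝕜 := ℂ) A‖

/-- Normalized `p`-th Schatten norm `⟨|A|^p⟩^{1/p}`. -/
noncomputable def schatten {N : ℕ} (p : ℕ) (A : Matrix (Fin N) (Fin N) ℂ) : ℝ :=
  (ntr (matAbs A ^ p)).re ^ ((p : ℝ)⁻¹)

/-- The `ℓ`-weighted `(2,p)`-Schatten norm, `p ∈ [2,∞]` (`p = ⊤` uses the operator norm). -/
noncomputable def wnorm {N : ℕ} (p : ℕ∞) (ℓ : ℝ) (A : Matrix (Fin N) (Fin N) ℂ) : ℝ :=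
  p.recTopCoe (schatten 2 A / ℓ ^ ((2:ℝ)⁻¹) + opNorm A)
    (fun q => schatten 2 A / ℓ ^ ((2:ℝ)⁻¹) + schatten q A / ℓ ^ ((q : ℝ)⁻¹))

/-- Resolvent `G(ζ) = (W - ζ)⁻¹`. -/
noncomputable def resOf {N : ℕ} (W : Matrix (Fin N) (Fin N) ℂ) (ζ : ℂ) :
    Matrix (Fin N) (Fin N) ℂ :=
  (W - ζ • (1 : Matrix (Fin N) (Fin N) ℂ))⁻¹

/-- `Im G = (G - Gᴴ)/(2i)`. -/
noncomputable def imPart {N : ℕ} (G : Matrix (Fin N) (Fin N) ℂ) : Matrix (Fin N) (Fin N) ℂ :=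
  (2 * Complex.I)⁻¹ • (G - Gᴴ)

/-- Bessel function of the first kind of order one (integral representation). -/
noncomputable def besselJ1 (x : ℝ) : ℝ :=
  (1 / Real.pi) * ∫ θ in (0:ℝ)..Real.pi, Real.cos (θ - x * Real.sin θ)

/-- Semicircle density on `[-2,2]`. -/
noncomputable def rhoSC (x : ℝ) : ℝ := (1 / (2 * Real.pi)) * Real.sqrt (4 - x ^ 2)

/-- Stieltjes transform of the semicircle law. -/
noncomputable def mSC (z : ℂ) : ℂ := ∫ x in (-2:ℝ)..2, (rhoSC x : ℂ) / (x - z)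

/-- `φ(t) = J₁(2t)/t`, with `φ(0) = 1`. -/
noncomputable def phiSC (t : ℝ) : ℝ := if t = 0 then 1 else besselJ1 (2 * t) / t

/-!
With `w = (N ℓ)⁻¹` and `μ` the singular values of `B`, the `k`-th term of `|||B|||` is
`(∑ w μᵢ ^ k) ^ k⁻¹`, so `ℓ` is absorbed into the weight. For `r ≤ p ≤ q` the termwise bound
`x ^ p ≤ x ^ r + x ^ q` and homogeneity (rescale `μ` so that the `r`- and `q`-terms add up to `1`,
so that each is at most `1`) give that the `p`-term is at most the sum of the `r`- and `q`-terms;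
for `q = ∞` use `μᵢ ^ p ≤ ‖B‖ ^ (p - r) * μᵢ ^ r` instead. Hence `C = 2` works.
-/

theorem pow_le_pow_add_pow {R : Type*} [Semiring R] [LinearOrder R] [IsOrderedRing R] {x : R}
    (hx : 0 ≤ x) {r p q : ℕ} (hrp : r ≤ p) (hpq : p ≤ q) : x ^ p ≤ x ^ r + x ^ q := by
  rcases le_total x 1 with hx1 | hx1
  · exact (pow_le_pow_of_le_one hx hx1 hrp).trans (le_add_of_nonneg_right (pow_nonneg hx q))
  · exact (pow_le_pow_right₀ hx1 hpq).trans (le_add_of_nonneg_left (pow_nonneg hx r))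

namespace Real

open Finset

variable {ι : Type*} (s : Finset ι) {w μ : ι → ℝ}

theorem sum_mul_pow_le_add (hw : ∀ i ∈ s, 0 ≤ w i) (hμ : ∀ i ∈ s, 0 ≤ μ i) {r p q : ℕ}
    (hrp : r ≤ p) (hpq : p ≤ q) :
    ∑ i ∈ s, w i * μ i ^ p ≤ ∑ i ∈ s, w i * μ i ^ r + ∑ i ∈ s, w i * μ i ^ q := by
  rw [← sum_add_distrib]
  refine sum_le_sum fun i hi => ?_
  rw [← mul_add]
  exact mul_le_mul_of_nonneg_left (pow_le_pow_add_pow (hμ i hi) hrp hpq) (hw i hi)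

theorem sum_mul_pow_le_pow_mul_sum (hw : ∀ i ∈ s, 0 ≤ w i) (hμ : ∀ i ∈ s, 0 ≤ μ i) {K : ℝ}
    (hK : ∀ i ∈ s, μ i ≤ K) {r p : ℕ} (hrp : r ≤ p) :
    ∑ i ∈ s, w i * μ i ^ p ≤ K ^ (p - r) * ∑ i ∈ s, w i * μ i ^ r := by
  rw [mul_sum]
  refine sum_le_sum fun i hi => ?_
  calc w i * μ i ^ p = w i * μ i ^ r * μ i ^ (p - r) := by
        rw [mul_assoc, ← pow_add, Nat.add_sub_cancel' hrp]
    _ ≤ w i * μ i ^ r * K ^ (p - r) := by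
        gcongr
        · exact mul_nonneg (hw i hi) (pow_nonneg (hμ i hi) r)
        · exact hμ i hi
        · exact hK i hi
    _ = K ^ (p - r) * (w i * μ i ^ r) := mul_comm _ _

theorem sum_mul_pow_rpow_inv_le_add (hw : ∀ i ∈ s, 0 ≤ w i) (hμ : ∀ i ∈ s, 0 ≤ μ i)
    {r p q : ℕ} (hr : r ≠ 0) (hrp : r ≤ p) (hpq : p ≤ q) :
    (∑ i ∈ s, w i * μ i ^ p) ^ (p⁻¹ : ℝ) ≤
      (∑ i ∈ s, w i * μ i ^ r) ^ (r⁻¹ : ℝ) + (∑ i ∈ s, w i * μ i ^ q) ^ (q⁻¹ : ℝ) := by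
  have hS : ∀ k : ℕ, 0 ≤ ∑ i ∈ s, w i * μ i ^ k := fun k =>
    sum_nonneg fun i hi => mul_nonneg (hw i hi) (pow_nonneg (hμ i hi) k)
  set a := (∑ i ∈ s, w i * μ i ^ r) ^ (r⁻¹ : ℝ)
  set b := (∑ i ∈ s, w i * μ i ^ q) ^ (q⁻¹ : ℝ)
  have ha : a ^ r = ∑ i ∈ s, w i * μ i ^ r := rpow_inv_natCast_pow (hS r) hr
  have hb : b ^ q = ∑ i ∈ s, w i * μ i ^ q := rpow_inv_natCast_pow (hS q) (by omega)
  have ha0 : 0 ≤ a := rpow_nonneg (hS r) _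
  have hb0 : 0 ≤ b := rpow_nonneg (hS q) _
  rw [rpow_inv_le_iff_of_pos (hS p) (add_nonneg ha0 hb0) (Nat.cast_pos.mpr (by omega)),
    rpow_natCast]
  rcases (add_nonneg ha0 hb0).eq_or_lt with ht | ht
  · obtain ⟨ha', hb'⟩ := (add_eq_zero_iff_of_nonneg ha0 hb0).mp ht.symm
    calc ∑ i ∈ s, w i * μ i ^ p ≤ a ^ r + b ^ q := by
          rw [ha, hb]; exact sum_mul_pow_le_add s hw hμ hrp hpq
      _ = (a + b) ^ p := by
          rw [ha', hb', add_zero, zero_pow hr, zero_pow (by omega), zero_pow (by omega), add_zero]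
  have hμt : ∀ i ∈ s, 0 ≤ μ i / (a + b) := fun i hi => div_nonneg (hμ i hi) ht.le
  have hscale : ∀ k : ℕ, ∑ i ∈ s, w i * (μ i / (a + b)) ^ k =
      (∑ i ∈ s, w i * μ i ^ k) / (a + b) ^ k := fun k => by
    simp only [div_pow, ← mul_div_assoc, sum_div]
  rw [← div_le_one (pow_pos ht p), ← hscale]
  calc ∑ i ∈ s, w i * (μ i / (a + b)) ^ p
      ≤ ∑ i ∈ s, w i * (μ i / (a + b)) ^ r + ∑ i ∈ s, w i * (μ i / (a + b)) ^ q :=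
        sum_mul_pow_le_add s hw hμt hrp hpq
    _ = (a / (a + b)) ^ r + (b / (a + b)) ^ q := by
        rw [hscale, hscale, ← ha, ← hb, div_pow, div_pow]
    _ ≤ a / (a + b) + b / (a + b) := by
        gcongr
        · exact pow_le_of_le_one (by positivity) ((div_le_one ht).mpr (by linarith)) hr
        · exact pow_le_of_le_one (by positivity) ((div_le_one ht).mpr (by linarith)) (by omega)
    _ = 1 := by rw [← add_div, div_self ht.ne']

theorem sum_mul_pow_rpow_inv_le_add_of_le (hw : ∀ i ∈ s, 0 ≤ w i) (hμ : ∀ i ∈ s, 0 ≤ μ i)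
    {K : ℝ} (hK0 : 0 ≤ K) (hK : ∀ i ∈ s, μ i ≤ K) {r p : ℕ} (hr : r ≠ 0) (hrp : r ≤ p) :
    (∑ i ∈ s, w i * μ i ^ p) ^ (p⁻¹ : ℝ) ≤ (∑ i ∈ s, w i * μ i ^ r) ^ (r⁻¹ : ℝ) + K := by
  have hS : ∀ k : ℕ, 0 ≤ ∑ i ∈ s, w i * μ i ^ k := fun k =>
    sum_nonneg fun i hi => mul_nonneg (hw i hi) (pow_nonneg (hμ i hi) k)
  set a := (∑ i ∈ s, w i * μ i ^ r) ^ (r⁻¹ : ℝ)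
  have ha0 : 0 ≤ a := rpow_nonneg (hS r) _
  rw [rpow_inv_le_iff_of_pos (hS p) (add_nonneg ha0 hK0) (Nat.cast_pos.mpr (by omega)),
    rpow_natCast]
  calc ∑ i ∈ s, w i * μ i ^ p ≤ K ^ (p - r) * a ^ r := by
        rw [rpow_inv_natCast_pow (hS r) hr]; exact sum_mul_pow_le_pow_mul_sum s hw hμ hK hrp
    _ ≤ (a + K) ^ (p - r) * (a + K) ^ r := by
        gcongr
        · exact le_add_of_nonneg_left ha0
        · exact le_add_of_nonneg_right hK0
    _ = (a + K) ^ p := by rw [← pow_add, Nat.sub_add_cancel hrp]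

end Real

namespace Matrix

variable {N : ℕ}

noncomputable def singularValues (A : Matrix (Fin N) (Fin N) ℂ) : Fin N → ℝ :=
  Real.sqrt ∘ (posSemidef_self_mul_conjTranspose A).1.eigenvalues

lemma singularValues_nonneg (A : Matrix (Fin N) (Fin N) ℂ) (i : Fin N) :
    0 ≤ singularValues A i :=
  Real.sqrt_nonneg _

open scoped Matrix.Norms.L2Operator in
lemma singularValues_le_opNorm (A : Matrix (Fin N) (Fin N) ℂ) (i : Fin N) :
    singularValues A i ≤ opNorm A := by
  have : Nonempty (Fin N) := ⟨i⟩
  have heig := spectrum.norm_le_norm_of_mem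
    ((posSemidef_self_mul_conjTranspose A).1.eigenvalues_mem_spectrum_real i)
  have hnorm : ‖A * Aᴴ‖ = ‖A‖ * ‖A‖ := CStarRing.norm_self_mul_star
  rw [hnorm] at heig
  calc singularValues A i ≤ √(‖A‖ * ‖A‖) := Real.sqrt_le_sqrt ((le_abs_self _).trans heig)
    _ = opNorm A := Real.sqrt_mul_self (norm_nonneg A)

end Matrix

section Schatten

variable {N : ℕ} (A : Matrix (Fin N) (Fin N) ℂ) {ℓ : ℝ}

lemma trace_matAbs_pow (p : ℕ) :
    (matAbs A ^ p).trace = ∑ i, (A.singularValues i : ℂ) ^ p := by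
  set U := (posSemidef_self_mul_conjTranspose A).1.eigenvectorUnitary
  have hconj : matAbs A = Unitary.conjStarAlgAut ℂ _ U
      (diagonal ((↑) ∘ A.singularValues)) := rfl
  rw [hconj, ← map_pow, Unitary.conjStarAlgAut_apply, trace_mul_cycle,
    mem_unitaryGroup_iff'.mp U.2, one_mul, diagonal_pow, trace_diagonal]
  rfl

lemma schatten_eq (p : ℕ) :
    schatten p A = ((N : ℝ)⁻¹ * ∑ i, A.singularValues i ^ p) ^ (p⁻¹ : ℝ) := by
  rw [schatten, ntr, trace_matAbs_pow]
  norm_cast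
  rw [← Complex.ofReal_natCast, ← Complex.ofReal_inv, ← Complex.ofReal_mul, Complex.ofReal_re]

lemma schatten_nonneg (p : ℕ) : 0 ≤ schatten p A := by
  rw [schatten_eq]
  exact Real.rpow_nonneg (mul_nonneg (by positivity)
    (Finset.sum_nonneg fun i _ => pow_nonneg (A.singularValues_nonneg i) p)) _

lemma schatten_div_rpow_eq (hℓ : 0 ≤ ℓ) (p : ℕ) :
    schatten p A / ℓ ^ (p⁻¹ : ℝ) =
      (∑ i, (N * ℓ)⁻¹ * A.singularValues i ^ p) ^ (p⁻¹ : ℝ) := by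
  rw [schatten_eq, ← Real.div_rpow (mul_nonneg (by positivity)
    (Finset.sum_nonneg fun i _ => pow_nonneg (A.singularValues_nonneg i) p)) hℓ,
    Finset.mul_sum, Finset.sum_div]
  exact congrArg (· ^ (p⁻¹ : ℝ)) (Finset.sum_congr rfl fun i _ => by rw [mul_inv]; ring)

theorem schatten_div_rpow_le_add (hℓ : 0 ≤ ℓ) {r p q : ℕ} (hr : r ≠ 0) (hrp : r ≤ p)
    (hpq : p ≤ q) :
    schatten p A / ℓ ^ (p⁻¹ : ℝ) ≤
      schatten r A / ℓ ^ (r⁻¹ : ℝ) + schatten q A / ℓ ^ (q⁻¹ : ℝ) := by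
  simp only [schatten_div_rpow_eq A hℓ]
  exact Real.sum_mul_pow_rpow_inv_le_add _ (fun _ _ => by positivity)
    (fun i _ => A.singularValues_nonneg i) hr hrp hpq

theorem schatten_div_rpow_le_add_opNorm (hℓ : 0 ≤ ℓ) {r p : ℕ} (hr : r ≠ 0) (hrp : r ≤ p) :
    schatten p A / ℓ ^ (p⁻¹ : ℝ) ≤ schatten r A / ℓ ^ (r⁻¹ : ℝ) + opNorm A := by
  simp only [schatten_div_rpow_eq A hℓ]
  exact Real.sum_mul_pow_rpow_inv_le_add_of_le _ (fun _ _ => by positivity)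
    (fun i _ => A.singularValues_nonneg i) (norm_nonneg _)
    (fun i _ => A.singularValues_le_opNorm i) hr hrp

end Schatten

/-- `|||B|||_{p,ℓ} ≲ |||B|||_{q,ℓ}` for `2 ≤ p ≤ q ≤ ∞`. -/
theorem wnorm_mono :
    ∃ C : ℝ, 0 < C ∧ ∀ (N : ℕ) (B : Matrix (Fin N) (Fin N) ℂ) (ℓ : ℝ) (p q : ℕ∞),
      0 < ℓ → 2 ≤ p → p ≤ q →
      wnorm p ℓ B ≤ C * wnorm q ℓ B := by
  refine ⟨2, two_pos, fun N B ℓ p q hℓ h2p hpq => ?_⟩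
  have hnonneg : ∀ k : ℕ, 0 ≤ schatten k B / ℓ ^ (k⁻¹ : ℝ) := fun k =>
    div_nonneg (schatten_nonneg B k) (Real.rpow_nonneg hℓ.le _)
  have hop : 0 ≤ opNorm B := norm_nonneg _
  cases p with
  | top =>
    obtain rfl := top_le_iff.mp hpq
    simp only [wnorm, ENat.recTopCoe_top]
    linarith [hnonneg 2]
  | coe m =>
    have h2m : 2 ≤ m := by exact_mod_cast h2p
    cases q with
    | top =>
      simp only [wnorm, ENat.recTopCoe_top, ENat.recTopCoe_natCast]
      linarith [schatten_div_rpow_le_add_opNorm B hℓ.le two_ne_zero h2m, hnonneg 2]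
    | coe n =>
      simp only [wnorm, ENat.recTopCoe_natCast]
      linarith [schatten_div_rpow_le_add B hℓ.le two_ne_zero h2m (by exact_mod_cast hpq),
        hnonneg 2, hnonneg n]
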